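/- For every natural number n, the number of positive integers i such that e(i) = n equals 3^n, where e(i) = deg B_i(t) is the degree of the i-th Stern polynomial; that is, the set {i ∈ ℕ, i ≥ 1 : e(i) = n} is finite with cardinality 3^n. -/
import Mathlib


open Polynomial

/-- The Stern polynomials: `B 0 = 0`, `B 1 = 1`, `B (2n) = t * B n`,
`B (2n+1) = B n + B (n+1)`. -/
noncomputable def stern : ℕ → Polynomial ℤ
  | 0 => 0
  | 1 => 1
  | n + 2 =>
    if _h : n % 2 = 0 then
      X * stern (n / 2 + 1)
    else
      stern (n / 2 + 1) + stern (n / 2 + 2)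
  decreasing_by all_goals omega

/-- `e n` is the degree of the `n`-th Stern polynomial. -/
noncomputable def e (n : ℕ) : ℕ := (stern n).natDegree

lemma stern_two_mul (n : ℕ) (hn : 1 ≤ n) : stern (2 * n) = X * stern n := by
  obtain ⟨m, rfl⟩ : ∃ m, n = m + 1 := ⟨n - 1, by omega⟩
  have : 2 * (m + 1) = (2 * m) + 2 := by ring
  rw [this, stern]
  rw [dif_pos (Nat.mul_mod_right 2 m), show 2*m/2 = m by omega]

lemma stern_two_mul_add_one (n : ℕ) (hn : 1 ≤ n) :
    stern (2 * n + 1) = stern n + stern (n + 1) := by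
  obtain ⟨m, rfl⟩ : ∃ m, n = m + 1 := ⟨n - 1, by omega⟩
  have : 2 * (m + 1) + 1 = (2 * m + 1) + 2 := by ring
  rw [this, stern]
  rw [dif_neg (by omega)]
  congr 2 <;> omega

lemma stern_eval_one_pos (n : ℕ) (hn : 1 ≤ n) : 0 < (stern n).eval 1 := by
  induction n using Nat.strong_induction_on with
  | _ n ih =>
    match n, hn with
    | 1, _ => simp [stern]
    | (n+2), _ =>
      rcases Nat.even_or_odd (n + 2) with ⟨m, hm⟩ | ⟨m, hm⟩
      · have hm1 : 1 ≤ m := by omega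
        rw [show n + 2 = 2 * m by omega, stern_two_mul m hm1]
        simpa using ih m (by omega) hm1
      · have hm1 : 1 ≤ m := by omega
        rw [show n + 2 = 2 * m + 1 by omega, stern_two_mul_add_one m hm1]
        have := ih m (by omega) hm1
        have := ih (m+1) (by omega) (by omega)
        simp only [eval_add]
        omega

lemma stern_ne_zero (n : ℕ) (hn : 1 ≤ n) : stern n ≠ 0 := by
  intro h
  have := stern_eval_one_pos n hn
  rw [h] at this; simp at this

lemma stern_coeff_nonneg (n : ℕ) : ∀ k, 0 ≤ (stern n).coeff k := by
  induction n using Nat.strong_induction_on with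
  | _ n ih =>
    match n with
    | 0 => intro k; simp [stern]
    | 1 =>
      intro k
      have h1 : stern 1 = 1 := by rw [stern]
      rw [h1]
      rcases Nat.eq_zero_or_pos k with rfl | hk
      · simp
      · simp [coeff_one, Nat.pos_iff_ne_zero.mp hk]
    | (n+2) =>
      intro k
      rcases Nat.even_or_odd (n + 2) with ⟨m, hm⟩ | ⟨m, hm⟩
      · rw [show n + 2 = 2 * m by omega, stern_two_mul m (by omega)]
        rcases Nat.eq_zero_or_pos k with rfl | hk
        · simp [coeff_zero_eq_eval_zero]
        · obtain ⟨j, rfl⟩ : ∃ j, k = j + 1 := ⟨k - 1, by omega⟩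
          rw [coeff_X_mul]
          exact ih m (by omega) _
      · rw [show n + 2 = 2 * m + 1 by omega, stern_two_mul_add_one m (by omega)]
        rw [coeff_add]
        exact add_nonneg (ih m (by omega) _) (ih (m+1) (by omega) _)

lemma e_one : e 1 = 0 := by
  have h1 : stern 1 = 1 := by rw [stern]
  simp [e, h1]

lemma e_two_mul (n : ℕ) (hn : 1 ≤ n) : e (2 * n) = e n + 1 := by
  unfold e
  rw [stern_two_mul n hn, natDegree_mul X_ne_zero (stern_ne_zero n hn), natDegree_X]
  omega

lemma natDegree_add_eq_max (p q : Polynomial ℤ) (hp : p ≠ 0) (hq : q ≠ 0)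
    (hpc : ∀ k, 0 ≤ p.coeff k) (hqc : ∀ k, 0 ≤ q.coeff k) :
    (p + q).natDegree = max p.natDegree q.natDegree := by
  apply le_antisymm (natDegree_add_le p q)
  have hcoeff : 0 < (p + q).coeff (max p.natDegree q.natDegree) := by
    rw [coeff_add]
    have hp' : 0 < p.coeff p.natDegree :=
      lt_of_le_of_ne (hpc _) (Ne.symm (mt leadingCoeff_eq_zero.mp hp))
    have hq' : 0 < q.coeff q.natDegree :=
      lt_of_le_of_ne (hqc _) (Ne.symm (mt leadingCoeff_eq_zero.mp hq))
    rcases le_total p.natDegree q.natDegree with h | h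
    · rw [max_eq_right h]
      exact add_pos_of_nonneg_of_pos (hpc _) hq'
    · rw [max_eq_left h]
      exact add_pos_of_pos_of_nonneg hp' (hqc _)
  exact le_natDegree_of_ne_zero (ne_of_gt hcoeff)

lemma e_odd (n : ℕ) (hn : 1 ≤ n) : e (2 * n + 1) = max (e n) (e (n + 1)) := by
  unfold e
  rw [stern_two_mul_add_one n hn]
  exact natDegree_add_eq_max _ _ (stern_ne_zero n hn) (stern_ne_zero (n+1) (by omega))
    (stern_coeff_nonneg n) (stern_coeff_nonneg (n+1))

lemma e_pos_of_two_le (n : ℕ) (hn : 2 ≤ n) : 1 ≤ e n := by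
  induction n using Nat.strong_induction_on with
  | _ n ih =>
    rcases Nat.even_or_odd n with ⟨m, hm⟩ | ⟨m, hm⟩
    · rw [show n = 2 * m by omega, e_two_mul m (by omega)]; omega
    · have hm1 : 1 ≤ m := by omega
      rw [show n = 2 * m + 1 by omega, e_odd m hm1]
      rcases Nat.even_or_odd m with ⟨j, hj⟩ | ⟨j, hj⟩
      · have : 1 ≤ e m := ih m (by omega) (by omega)
        omega
      · have : 1 ≤ e (m + 1) := by
          rw [show m + 1 = 2 * (j + 1) by omega, e_two_mul (j+1) (by omega)]; omega
        omega

lemma e_eq_zero_iff (n : ℕ) (hn : 1 ≤ n) : e n = 0 ↔ n = 1 := by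
  constructor
  · intro h
    by_contra hne
    have := e_pos_of_two_le n (by omega)
    omega
  · rintro rfl; exact e_one

lemma e_consecutive (n : ℕ) (hn : 1 ≤ n) : e (n + 1) ≤ e n + 1 ∧ e n ≤ e (n + 1) + 1 := by
  induction n using Nat.strong_induction_on with
  | _ n ih =>
    match n, hn with
    | 1, _ =>
      rw [e_one, show (1:ℕ)+1 = 2*1 by norm_num, e_two_mul 1 (by norm_num), e_one]
      omega
    | (n+2), _ =>
      rcases Nat.even_or_odd (n + 2) with ⟨m, hm⟩ | ⟨m, hm⟩
      · have hm1 : 1 ≤ m := by omega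
        have IH := ih m (by omega) hm1
        rw [show n + 2 = 2 * m by omega, e_two_mul m hm1,
          show 2 * m + 1 = 2 * m + 1 from rfl, e_odd m hm1]
        omega
      · have hm1 : 1 ≤ m := by omega
        have IH := ih m (by omega) hm1
        rw [show n + 2 = 2 * m + 1 by omega, e_odd m hm1,
          show 2 * m + 1 + 1 = 2 * (m + 1) by ring, e_two_mul (m+1) (by omega)]
        omega

lemma e_log_bound (n : ℕ) (hn : 1 ≤ n) : Nat.log 2 n ≤ e n + e (n + 1) := by
  induction n using Nat.strong_induction_on with
  | _ n ih =>
    match n, hn with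
    | 1, _ => simp
    | (n+2), _ =>
      rcases Nat.even_or_odd (n + 2) with ⟨m, hm⟩ | ⟨m, hm⟩
      · have hm1 : 1 ≤ m := by omega
        have IH := ih m (by omega) hm1
        have hlog : Nat.log 2 (2 * m) = Nat.log 2 m + 1 := by
          rw [mul_comm, Nat.log_mul_base (by norm_num) (by omega)]
        rw [show n + 2 = 2 * m by omega, e_two_mul m hm1, e_odd m hm1, hlog]
        have : e m ≤ max (e m) (e (m+1)) := le_max_left _ _
        omega
      · have hm1 : 1 ≤ m := by omega
        have IH := ih m (by omega) hm1
        have hlog : Nat.log 2 (2 * m + 1) = Nat.log 2 m + 1 := by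
          have h1 : (2 * m + 1) / 2 * 2 = m * 2 := by omega
          have h2 := Nat.log_div_mul_self 2 (2 * m + 1)
          rw [h1, Nat.log_mul_base (by norm_num) (by omega)] at h2
          omega
        rw [show n + 2 = 2 * m + 1 by omega, e_odd m hm1,
          show 2 * m + 1 + 1 = 2 * (m + 1) by ring, e_two_mul (m+1) (by omega), hlog]
        have : e (m+1) ≤ max (e m) (e (m+1)) := le_max_right _ _
        have hmax : e m ≤ max (e m) (e (m+1)) := le_max_left _ _
        omega

lemma e_two : e 2 = 1 := by
  rw [show (2:ℕ) = 2*1 by norm_num, e_two_mul 1 le_rfl, e_one]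

lemma e_bound (k i : ℕ) (hi : 1 ≤ i) (he : e i = k) : i ≤ 2^(2*k+2) := by
  have h1 := e_log_bound i hi
  have h2 := (e_consecutive i hi).1
  have h3 := Nat.lt_pow_succ_log_self (b := 2) (by norm_num) i
  have h4 : Nat.log 2 i + 1 ≤ 2*k+2 := by omega
  have h5 : (2:ℕ)^(Nat.log 2 i + 1) ≤ 2^(2*k+2) := Nat.pow_le_pow_right (by norm_num) h4
  omega

def SA (k : ℕ) : Set ℕ := {i | 1 ≤ i ∧ e i = k ∧ e (i+1) = k}
def SB (k : ℕ) : Set ℕ := {i | 1 ≤ i ∧ e i = k ∧ e (i+1) = k+1}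
def SC (k : ℕ) : Set ℕ := {i | 1 ≤ i ∧ e i = k+1 ∧ e (i+1) = k}

lemma SA_finite (k : ℕ) : (SA k).Finite :=
  (Set.finite_Iic (2^(2*k+2))).subset (fun i hi => e_bound k i hi.1 hi.2.1)

lemma SB_finite (k : ℕ) : (SB k).Finite :=
  (Set.finite_Iic (2^(2*k+2))).subset (fun i hi => e_bound k i hi.1 hi.2.1)

lemma SC_finite (k : ℕ) : (SC k).Finite :=
  (Set.finite_Iic (2^(2*(k+1)+2))).subset (fun i hi => e_bound (k+1) i hi.1 hi.2.1)

lemma SA_zero : SA 0 = ∅ := by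
  ext i
  simp only [SA, Set.mem_setOf_eq, Set.mem_empty_iff_false, iff_false]
  rintro ⟨hi, h1, h2⟩
  have := (e_eq_zero_iff i hi).mp h1
  subst this
  rw [e_two] at h2
  omega

lemma SB_zero : SB 0 = {1} := by
  ext i
  simp only [SB, Set.mem_setOf_eq, Set.mem_singleton_iff]
  constructor
  · rintro ⟨hi, h1, _⟩
    exact (e_eq_zero_iff i hi).mp h1
  · rintro rfl
    exact ⟨le_rfl, e_one, by rw [e_two]⟩

lemma SC_zero : SC 0 = ∅ := by
  ext i
  simp only [SC, Set.mem_setOf_eq, Set.mem_empty_iff_false, iff_false]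
  rintro ⟨hi, _, h2⟩
  have := (e_eq_zero_iff (i+1) (by omega)).mp h2
  omega

lemma SA_succ (k : ℕ) : SA (k+1) = (fun j => 2*j) '' SB k ∪ (fun j => 2*j+1) '' SC k := by
  ext i
  simp only [SA, SB, SC, Set.mem_setOf_eq, Set.mem_union, Set.mem_image]
  constructor
  · rintro ⟨hi, h1, h2⟩
    have hne : i ≠ 1 := by
      rintro rfl; rw [e_one] at h1; omega
    rcases Nat.even_or_odd i with ⟨j, hj⟩ | ⟨j, hj⟩
    · have hj1 : 1 ≤ j := by omega
      subst_eqs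
      rw [show j + j = 2 * j by ring] at h1 h2 hi
      rw [e_two_mul j hj1] at h1
      rw [e_odd j hj1] at h2
      left
      refine ⟨j, ⟨hj1, by omega, ?_⟩, by ring⟩
      omega
    · have hj1 : 1 ≤ j := by omega
      rw [hj, e_odd j hj1] at h1
      rw [hj, show 2*j+1+1 = 2*(j+1) by ring, e_two_mul (j+1) (by omega)] at h2
      right
      refine ⟨j, ⟨hj1, ?_, by omega⟩, hj.symm⟩
      omega
  · rintro (⟨j, ⟨hj1, h1, h2⟩, rfl⟩ | ⟨j, ⟨hj1, h1, h2⟩, rfl⟩)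
    · refine ⟨by omega, ?_, ?_⟩
      · rw [e_two_mul j hj1]; omega
      · rw [e_odd j hj1]; omega
    · refine ⟨by omega, ?_, ?_⟩
      · rw [e_odd j hj1]; omega
      · rw [show 2*j+1+1 = 2*(j+1) by ring, e_two_mul (j+1) (by omega)]; omega

lemma SB_succ (k : ℕ) : SB (k+1) = (fun j => 2*j+1) '' (SA (k+1) ∪ SB k) := by
  ext i
  simp only [SA, SB, Set.mem_setOf_eq, Set.mem_union, Set.mem_image]
  constructor
  · rintro ⟨hi, h1, h2⟩
    have hne : i ≠ 1 := by
      rintro rfl; rw [e_two] at h2; omega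
    rcases Nat.even_or_odd i with ⟨j, hj⟩ | ⟨j, hj⟩
    · exfalso
      have hj1 : 1 ≤ j := by omega
      rw [hj, show j + j = 2 * j by ring] at h1 h2
      rw [e_two_mul j hj1] at h1
      rw [e_odd j hj1] at h2
      have := e_consecutive j hj1
      omega
    · have hj1 : 1 ≤ j := by omega
      rw [hj, e_odd j hj1] at h1
      rw [hj, show 2*j+1+1 = 2*(j+1) by ring, e_two_mul (j+1) (by omega)] at h2
      have hcons := e_consecutive j hj1
      refine ⟨j, ?_, hj.symm⟩
      rcases Nat.lt_or_ge (e j) (k+1) with h | h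
      · right; exact ⟨hj1, by omega, by omega⟩
      · left; exact ⟨hj1, by omega, by omega⟩
  · rintro ⟨j, ⟨hj1, h1, h2⟩ | ⟨hj1, h1, h2⟩, rfl⟩
    · refine ⟨by omega, ?_, ?_⟩
      · rw [e_odd j hj1]; omega
      · rw [show 2*j+1+1 = 2*(j+1) by ring, e_two_mul (j+1) (by omega)]; omega
    · refine ⟨by omega, ?_, ?_⟩
      · rw [e_odd j hj1]; omega
      · rw [show 2*j+1+1 = 2*(j+1) by ring, e_two_mul (j+1) (by omega)]; omega

lemma SC_succ (k : ℕ) : SC (k+1) = (fun j => 2*j) '' (SA (k+1) ∪ SC k) := by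
  ext i
  simp only [SA, SC, Set.mem_setOf_eq, Set.mem_union, Set.mem_image]
  constructor
  · rintro ⟨hi, h1, h2⟩
    have hne : i ≠ 1 := by
      rintro rfl; rw [e_one] at h1; omega
    rcases Nat.even_or_odd i with ⟨j, hj⟩ | ⟨j, hj⟩
    · have hj1 : 1 ≤ j := by omega
      rw [hj, show j + j = 2 * j by ring] at h1 h2
      rw [e_two_mul j hj1] at h1
      rw [e_odd j hj1] at h2
      have hcons := e_consecutive j hj1
      refine ⟨j, ?_, by omega⟩
      rcases Nat.lt_or_ge (e (j+1)) (k+1) with h | h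
      · right; exact ⟨hj1, by omega, by omega⟩
      · left; exact ⟨hj1, by omega, by omega⟩
    · exfalso
      have hj1 : 1 ≤ j := by omega
      rw [hj, e_odd j hj1] at h1
      rw [hj, show 2*j+1+1 = 2*(j+1) by ring, e_two_mul (j+1) (by omega)] at h2
      have := e_consecutive j hj1
      omega
  · rintro ⟨j, ⟨hj1, h1, h2⟩ | ⟨hj1, h1, h2⟩, rfl⟩
    · refine ⟨by omega, ?_, ?_⟩
      · rw [e_two_mul j hj1]; omega
      · rw [e_odd j hj1]; omega
    · refine ⟨by omega, ?_, ?_⟩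
      · rw [e_two_mul j hj1]; omega
      · rw [e_odd j hj1]; omega

lemma inj_even : Function.Injective (fun j : ℕ => 2*j) := fun a b h => by
  simp only at h; omega

lemma inj_odd : Function.Injective (fun j : ℕ => 2*j+1) := fun a b h => by
  simp only at h; omega

lemma odd_pow3 (k : ℕ) : 3^k % 2 = 1 := by
  induction k with
  | zero => rfl
  | succ k ih => rw [pow_succ]; omega

lemma SA_succ_ncard_aux (k : ℕ) (hb : (SB k).ncard = (3^k+1)/2)
    (hc : (SC k).ncard = (3^k-1)/2) : (SA (k+1)).ncard = 3^k := by
  rw [SA_succ k]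
  rw [Set.ncard_union_eq ?disj (((SB_finite k)).image _) ((SC_finite k).image _)]
  case disj =>
    rw [Set.disjoint_left]
    rintro a ⟨j, _, rfl⟩ ⟨j', _, h'⟩
    change 2*j'+1 = 2*j at h'
    omega
  rw [Set.ncard_image_of_injective _ inj_even, Set.ncard_image_of_injective _ inj_odd,
    hb, hc]
  have h2 := odd_pow3 k
  generalize 3^k = x at h2 ⊢
  omega

lemma cards (k : ℕ) : (SB k).ncard = (3^k+1)/2 ∧ (SC k).ncard = (3^k-1)/2 := by
  induction k with
  | zero => simp [SB_zero, SC_zero]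
  | succ k ih =>
    obtain ⟨hb, hc⟩ := ih
    have hA : (SA (k+1)).ncard = 3^k := SA_succ_ncard_aux k hb hc
    have h3 := odd_pow3 k
    have h3' : (3:ℕ)^(k+1) = 3 * 3^k := by ring
    constructor
    · rw [SB_succ k, Set.ncard_image_of_injective _ inj_odd]
      rw [Set.ncard_union_eq ?disj (SA_finite (k+1)) (SB_finite k)]
      case disj =>
        rw [Set.disjoint_left]
        rintro a ⟨_, h1, _⟩ ⟨_, h2, _⟩
        omega
      rw [hA, hb, h3']
      generalize 3^k = x at h3 ⊢
      omega
    · rw [SC_succ k, Set.ncard_image_of_injective _ inj_even]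
      rw [Set.ncard_union_eq ?disj (SA_finite (k+1)) (SC_finite k)]
      case disj =>
        rw [Set.disjoint_left]
        rintro a ⟨_, _, h1⟩ ⟨_, _, h2⟩
        omega
      rw [hA, hc, h3']
      generalize 3^k = x at h3 ⊢
      omega

lemma count_zero : {i : ℕ | 1 ≤ i ∧ e i = 0} = {1} := by
  ext i
  simp only [Set.mem_setOf_eq, Set.mem_singleton_iff]
  constructor
  · rintro ⟨hi, h⟩; exact (e_eq_zero_iff i hi).mp h
  · rintro rfl; exact ⟨le_rfl, e_one⟩

lemma count_succ (k : ℕ) :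
    {i : ℕ | 1 ≤ i ∧ e i = k + 1} = SA (k+1) ∪ SB (k+1) ∪ SC k := by
  ext i
  simp only [Set.mem_setOf_eq, Set.mem_union, SA, SB, SC]
  constructor
  · rintro ⟨hi, h⟩
    have hcons := e_consecutive i hi
    rcases Nat.lt_trichotomy (e (i+1)) (k+1) with h' | h' | h'
    · right; exact ⟨hi, h, by omega⟩
    · left; left; exact ⟨hi, h, h'⟩
    · left; right; exact ⟨hi, h, by omega⟩
  · rintro ((⟨hi, h, _⟩ | ⟨hi, h, _⟩) | ⟨hi, h, _⟩) <;> exact ⟨hi, h⟩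

theorem card_stern_degree_eq (n : ℕ) :
    {i : ℕ | 1 ≤ i ∧ e i = n}.Finite ∧ {i : ℕ | 1 ≤ i ∧ e i = n}.ncard = 3 ^ n := by
  cases n with
  | zero =>
    rw [count_zero]
    exact ⟨Set.finite_singleton 1, by simp⟩
  | succ k =>
    rw [count_succ k]
    have hfin : (SA (k+1) ∪ SB (k+1) ∪ SC k).Finite :=
      ((SA_finite (k+1)).union (SB_finite (k+1))).union (SC_finite k)
    refine ⟨hfin, ?_⟩
    obtain ⟨hb, hc⟩ := cards (k+1)
    obtain ⟨_, hc'⟩ := cards k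
    have hA : (SA (k+1)).ncard = 3^k := SA_succ_ncard_aux k (cards k).1 (cards k).2
    rw [Set.ncard_union_eq ?d1 ((SA_finite (k+1)).union (SB_finite (k+1))) (SC_finite k)]
    case d1 =>
      rw [Set.disjoint_left]
      rintro a (⟨_, _, h1⟩ | ⟨_, _, h1⟩) ⟨_, _, h2⟩ <;> omega
    rw [Set.ncard_union_eq ?d2 (SA_finite (k+1)) (SB_finite (k+1))]
    case d2 =>
      rw [Set.disjoint_left]
      rintro a ⟨_, _, h1⟩ ⟨_, _, h2⟩
      omega
    have h3 := odd_pow3 k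
    have h3' : (3:ℕ)^(k+1) = 3 * 3^k := by ring
    rw [hA, hb, hc', h3']
    generalize 3^k = x at h3 ⊢
    omega
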